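/- arXiv:1505.00772 — 2 statements merged into one kernel-verified Lean document; each statement's English description precedes it below -/
import Mathlib

section
/- Let (λ_j)_{j≥1} be a nonincreasing sequence of positive reals with Σ_{j≥1} λ_j² = 1, and let 0 < α < 1. Define the Renyi entropy R_α = (1−α)^{−1} log(Σ_{j≥1} λ_j^{2α}). Then for every positive integer D, the truncation error ε_D := Σ_{j≥D+1} λ_j² satisfies ε_D ≤ exp((1−α)(R_α − log D)/α). -/
/-! Write `p j = λ_j²` and `S = Σ_j p_j^α`. Since `p` is nonincreasing, each of the first `D`
terms of `S` is at least `p_D^α`, so `p_D^α ≤ S / D`. Every tail term satisfies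
`p_j = p_j^(1-α) p_j^α ≤ p_D^(1-α) p_j^α`, hence
`ε_D ≤ p_D^(1-α) S ≤ (S / D)^((1-α)/α) S = S^(1/α) D^(-(1-α)/α)`,
which is the claimed bound once `S = exp ((1-α) R_α)` is substituted. -/

open Real

theorem Antitone.natCast_mul_le_tsum {f : ℕ → ℝ} (hf : Antitone f) (hf0 : ∀ j, 0 ≤ f j)
    (hs : Summable f) (D : ℕ) : D * f D ≤ ∑' j, f j :=
  calc (D : ℝ) * f D = ∑ _j ∈ Finset.range D, f D := by simp
    _ ≤ ∑ j ∈ Finset.range D, f j :=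
      Finset.sum_le_sum fun j hj => hf (Finset.mem_range.mp hj).le
    _ ≤ ∑' j, f j := hs.sum_le_tsum _ fun j _ => hf0 j

theorem Real.le_rpow_one_sub_mul_rpow {x y α : ℝ} (hx : 0 ≤ x) (hxy : x ≤ y) (hα : α ≤ 1) :
    x ≤ y ^ (1 - α) * x ^ α :=
  calc x = x ^ (1 - α) * x ^ α := by
        rw [← rpow_add' hx (by simp), sub_add_cancel, rpow_one]
    _ ≤ y ^ (1 - α) * x ^ α :=
      mul_le_mul_of_nonneg_right (rpow_le_rpow hx hxy (by linarith)) (rpow_nonneg hx _)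

section Antitone

variable {a : ℕ → ℝ} (ha : Antitone a) (ha0 : ∀ j, 0 ≤ a j) {α : ℝ}
  (hsα : Summable fun j => a j ^ α)
include ha ha0 hsα

theorem Antitone.tsum_nat_add_le_rpow_mul_tsum_rpow (hs : Summable a) (hα : α ≤ 1) (D : ℕ) :
    ∑' j, a (j + D) ≤ a D ^ (1 - α) * ∑' j, a j ^ α :=
  calc ∑' j, a (j + D) ≤ ∑' j, a D ^ (1 - α) * a (j + D) ^ α :=
        Summable.tsum_le_tsum
          (fun j => le_rpow_one_sub_mul_rpow (ha0 _) (ha (Nat.le_add_left D j)) hα)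
          ((summable_nat_add_iff D).mpr hs)
          (((summable_nat_add_iff D).mpr hsα).mul_left _)
    _ = a D ^ (1 - α) * ∑' j, a (j + D) ^ α := tsum_mul_left
    _ ≤ a D ^ (1 - α) * ∑' j, a j ^ α :=
      mul_le_mul_of_nonneg_left
        (tsum_comp_le_tsum_of_inj hsα (fun j => rpow_nonneg (ha0 j) _) (add_left_injective D))
        (rpow_nonneg (ha0 D) _)

theorem Antitone.rpow_one_sub_le_div_rpow (hα0 : 0 < α) (hα1 : α ≤ 1) {D : ℕ} (hD : 0 < D) :
    a D ^ (1 - α) ≤ ((∑' j, a j ^ α) / D) ^ ((1 - α) / α) := by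
  have hanti : Antitone fun j => a j ^ α :=
    fun i j hij => rpow_le_rpow (ha0 j) (ha hij) hα0.le
  have hmean : a D ^ α ≤ (∑' j, a j ^ α) / D := by
    rw [le_div_iff₀ (by exact_mod_cast hD), mul_comm]
    exact hanti.natCast_mul_le_tsum (fun j => rpow_nonneg (ha0 j) _) hsα D
  calc a D ^ (1 - α) = (a D ^ α) ^ ((1 - α) / α) := by
        rw [← rpow_mul (ha0 D), mul_div_cancel₀ _ hα0.ne']
    _ ≤ ((∑' j, a j ^ α) / D) ^ ((1 - α) / α) :=
      rpow_le_rpow (rpow_nonneg (ha0 D) _) hmean (div_nonneg (by linarith) hα0.le)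

theorem Antitone.tsum_nat_add_le_of_tsum_rpow (hs : Summable a) (hα0 : 0 < α) (hα1 : α ≤ 1)
    {D : ℕ} (hD : 0 < D) :
    ∑' j, a (j + D) ≤ ((∑' j, a j ^ α) / D) ^ ((1 - α) / α) * ∑' j, a j ^ α :=
  (ha.tsum_nat_add_le_rpow_mul_tsum_rpow ha0 hsα hs hα1 D).trans <|
    mul_le_mul_of_nonneg_right (ha.rpow_one_sub_le_div_rpow ha0 hsα hα0 hα1 hD)
      (tsum_nonneg fun j => rpow_nonneg (ha0 j) _)

end Antitone

theorem truncation_error_le_of_renyi_general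
    (l : ℕ → ℝ)
    (hpos : ∀ j, 0 < l j)
    (hmono : ∀ i j, i ≤ j → l j ≤ l i)
    (hsq : Summable fun j => (l j) ^ 2)
    (α : ℝ) (hα0 : 0 < α) (hα1 : α < 1)
    (hren : Summable fun j => (l j) ^ (2 * α))
    (D : ℕ) (hD : 0 < D) :
    (∑' j : ℕ, (l (j + D)) ^ 2) ≤
      Real.exp ((1 - α) *
        ((1 - α)⁻¹ * Real.log (∑' j, (l j) ^ (2 * α)) - Real.log D) / α) := by
  have hrpow : ∀ j, l j ^ (2 * α) = (l j ^ 2) ^ α := fun j => by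
    rw [rpow_mul (hpos j).le, rpow_two]
  have hanti : Antitone fun j => l j ^ 2 :=
    fun i j hij => pow_le_pow_left₀ (hpos j).le (hmono i j hij) 2
  simp only [hrpow] at hren ⊢
  set S := ∑' j, (l j ^ 2) ^ α
  have hS : 0 < S := hren.tsum_pos (fun j => by positivity) 0
    (rpow_pos_of_pos (pow_pos (hpos 0) 2) α)
  have hDpos : (0 : ℝ) < D := by exact_mod_cast hD
  have hexp : (S / D) ^ ((1 - α) / α) * S =
      exp ((1 - α) * ((1 - α)⁻¹ * log S - log D) / α) := by
    rw [← exp_log (mul_pos (rpow_pos_of_pos (div_pos hS hDpos) _) hS), log_mul (by positivity)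
      hS.ne', log_rpow (div_pos hS hDpos), log_div hS.ne' hDpos.ne']
    field_simp [(by linarith : (1 : ℝ) - α ≠ 0)]
    ring_nf
  exact hexp ▸ hanti.tsum_nat_add_le_of_tsum_rpow (fun j => sq_nonneg _) hren hsq hα0 hα1.le hD

theorem truncation_error_le_of_renyi
    (l : ℕ → ℝ)
    (hpos : ∀ j, 0 < l j)
    (hmono : ∀ i j, i ≤ j → l j ≤ l i)
    (hsq : Summable fun j => (l j) ^ 2)
    (hnorm : (∑' j, (l j) ^ 2) = 1)
    (α : ℝ) (hα0 : 0 < α) (hα1 : α < 1)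
    (hren : Summable fun j => (l j) ^ (2 * α))
    (D : ℕ) (hD : 0 < D) :
    (∑' j : ℕ, (l (j + D)) ^ 2) ≤
      Real.exp ((1 - α) *
        ((1 - α)⁻¹ * Real.log (∑' j, (l j) ^ (2 * α)) - Real.log D) / α) :=
  truncation_error_le_of_renyi_general l hpos hmono hsq α hα0 hα1 hren D hD
end

section
/- Let H_A and H_B be finite-dimensional complex Hilbert spaces and let |ψ⟩ ∈ H_A ⊗ H_B be a unit vector with Schmidt decomposition |ψ⟩ = Σ_{j≥1} λ_j |l_j⟩ ⊗ |r_j⟩, where λ₁ ≥ λ₂ ≥ ⋯ > 0. For a positive integer D define trunc_D|ψ⟩ = Σ_{j=1}^D λ_j |l_j⟩ ⊗ |r_j⟩ and |ψ'⟩ = trunc_D|ψ⟩ / ‖trunc_D|ψ⟩‖. Then for every unit vector |φ⟩ ∈ H_A ⊗ H_B of Schmidt rank at most D, ⟨ψ'|ψ⟩ ≥ |⟨φ|ψ⟩|. -/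
/-- The standard Hermitian inner product `⟨x|y⟩ = Σ_i conj (x i) * (y i)` on `ι → ℂ`
(conjugate-linear in the first argument). -/
noncomputable def cinner {ι : Type*} [Fintype ι] (x y : ι → ℂ) : ℂ :=
  ∑ i, (starRingEnd ℂ) (x i) * y i

/-- A bipartite vector has Schmidt rank at most `D` iff it is a sum of `D` elementary
tensors. -/
def SchmidtRankLE {ιA ιB : Type*} (D : ℕ) (φ : ιA × ιB → ℂ) : Prop :=
  ∃ (x : Fin D → ιA → ℂ) (y : Fin D → ιB → ℂ), φ = fun p => ∑ j, x j p.1 * y j p.2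

/-!
Write `φ = ∑_{k<d} u_k ⊗ z_k` with `(u_k)` orthonormal and `d ≤ D`. Then
`⟨φ|ψ⟩ = ∑_{k,j} λ_j ⟨u_k|l_j⟩ ⟨z_k|r_j⟩`, and Cauchy–Schwarz, Bessel's inequality for `(r_j)`
and `‖φ‖ = 1` give `|⟨φ|ψ⟩|² ≤ ∑_j λ_j² p_j` with `p_j = ∑_k |⟨u_k|l_j⟩|²`. Bessel's inequality
again gives `0 ≤ p_j ≤ 1` and `∑_j p_j ≤ d ≤ D`, and against such weights the decreasing
sequence `λ_j²` sums to at most `∑_{j<D} λ_j² = ⟨ψ'|ψ⟩²`.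
-/

open Finset

section Cinner

variable {ι : Type*} [Fintype ι]

lemma cinner_eq_inner (x y : ι → ℂ) :
    cinner x y = inner ℂ (WithLp.toLp 2 x) (WithLp.toLp 2 y) := by
  simp [cinner, PiLp.inner_apply, mul_comm]

lemma norm_cinner_comm (x y : ι → ℂ) : ‖cinner x y‖ = ‖cinner y x‖ := by
  simp only [cinner_eq_inner, norm_inner_symm]

lemma cinner_real_smul_left (c : ℝ) (x y : ι → ℂ) : cinner (c • x) y = c * cinner x y := by
  simp only [cinner, Pi.smul_apply, Complex.real_smul, map_mul, Complex.conj_ofReal, mul_sum,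
    mul_assoc]

lemma cinner_smul_left (c : ℂ) (x y : ι → ℂ) :
    cinner (c • x) y = starRingEnd ℂ c * cinner x y := by
  simp only [cinner_eq_inner, WithLp.toLp_smul, inner_smul_left]

lemma cinner_smul_right (c : ℂ) (x y : ι → ℂ) : cinner x (c • y) = c * cinner x y := by
  simp only [cinner_eq_inner, WithLp.toLp_smul, inner_smul_right]

lemma cinner_sum_left {α : Type*} (s : Finset α) (x : α → ι → ℂ) (y : ι → ℂ) :
    cinner (fun i => ∑ j ∈ s, x j i) y = ∑ j ∈ s, cinner (x j) y := by
  simp only [cinner, map_sum, sum_mul]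
  exact sum_comm

lemma cinner_sum_right {α : Type*} (s : Finset α) (x : ι → ℂ) (y : α → ι → ℂ) :
    cinner x (fun i => ∑ j ∈ s, y j i) = ∑ j ∈ s, cinner x (y j) := by
  simp only [cinner, mul_sum]
  exact sum_comm

lemma sum_norm_cinner_sq_le {κ : Type*} [Fintype κ] [DecidableEq κ] {u : κ → ι → ℂ}
    (hu : ∀ i j, cinner (u i) (u j) = if i = j then 1 else 0) (v : ι → ℂ) :
    ∑ k, ‖cinner (u k) v‖ ^ 2 ≤ (cinner v v).re := by
  have hu' : Orthonormal ℂ (fun k => WithLp.toLp 2 (u k)) :=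
    orthonormal_iff_ite.mpr fun i j => by rw [← cinner_eq_inner, hu]
  rw [cinner_eq_inner, ← RCLike.re_to_complex, inner_self_eq_norm_sq]
  simpa only [cinner_eq_inner] using hu'.sum_inner_products_le (WithLp.toLp 2 v) (s := univ)

lemma sum_sum_norm_cinner_sq_le_card {κ μ : Type*} [Fintype κ] [DecidableEq κ] [Fintype μ]
    [DecidableEq μ] {u : κ → ι → ℂ} {v : μ → ι → ℂ}
    (hu : ∀ i j, cinner (u i) (u j) = if i = j then 1 else 0)
    (hv : ∀ i j, cinner (v i) (v j) = if i = j then 1 else 0) :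
    ∑ j, ∑ k, ‖cinner (u k) (v j)‖ ^ 2 ≤ Fintype.card κ := by
  rw [sum_comm, Fintype.card_eq_sum_ones, Nat.cast_sum]
  refine sum_le_sum fun k _ => ?_
  simpa only [norm_cinner_comm, hu k k, if_pos, Complex.one_re, Nat.cast_one] using
    sum_norm_cinner_sq_le hv (u k)

end Cinner

section Tensor

variable {ιA ιB : Type*} [Fintype ιA]

lemma cinner_tensor [Fintype ιB] (f f' : ιA → ℂ) (g g' : ιB → ℂ) :
    cinner (fun p : ιA × ιB => f p.1 * g p.2) (fun p => f' p.1 * g' p.2) =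
      cinner f f' * cinner g g' := by
  simp only [cinner, sum_mul_sum, Fintype.sum_prod_type, map_mul]
  exact sum_congr rfl fun _ _ => sum_congr rfl fun _ _ => by ring

lemma cinner_sum_tensor [Fintype ιB] {α β : Type*} (s : Finset α) (t : Finset β)
    (f : α → ιA → ℂ) (g : α → ιB → ℂ) (f' : β → ιA → ℂ) (g' : β → ιB → ℂ) :
    cinner (fun p : ιA × ιB => ∑ j ∈ s, f j p.1 * g j p.2)
        (fun p : ιA × ιB => ∑ k ∈ t, f' k p.1 * g' k p.2) =
      ∑ j ∈ s, ∑ k ∈ t, cinner (f j) (f' k) * cinner (g j) (g' k) := by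
  rw [cinner_sum_left]
  simp only [cinner_sum_right, cinner_tensor]

lemma cinner_schmidt_sum_of_subset [Fintype ιB] {κ : Type*} [DecidableEq κ] (lam : κ → ℝ)
    {l : κ → ιA → ℂ} {r : κ → ιB → ℂ}
    (hl : ∀ i j, cinner (l i) (l j) = if i = j then 1 else 0)
    (hr : ∀ i j, cinner (r i) (r j) = if i = j then 1 else 0) {s t : Finset κ} (hst : s ⊆ t) :
    cinner (fun p : ιA × ιB => ∑ j ∈ s, (lam j : ℂ) * l j p.1 * r j p.2)
        (fun p : ιA × ιB => ∑ j ∈ t, (lam j : ℂ) * l j p.1 * r j p.2) =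
      ((∑ j ∈ s, lam j ^ 2 : ℝ) : ℂ) := by
  refine (cinner_sum_tensor s t (fun j => (lam j : ℂ) • l j) r
    (fun j => (lam j : ℂ) • l j) r).trans ?_
  push_cast
  refine sum_congr rfl fun j hj => ?_
  simp only [cinner_smul_left, cinner_smul_right, hl, hr, Complex.conj_ofReal, mul_ite, mul_one,
    mul_zero, sum_ite_eq, hst hj, if_true]
  ring

lemma cinner_self_orthonormal_tensor_expansion [Fintype ιB] {κ : Type*} [Fintype κ]
    [DecidableEq κ] {u : κ → ιA → ℂ} (hu : ∀ i j, cinner (u i) (u j) = if i = j then 1 else 0)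
    (z : κ → ιB → ℂ) :
    cinner (fun p : ιA × ιB => ∑ k, u k p.1 * z k p.2)
        (fun p : ιA × ιB => ∑ k, u k p.1 * z k p.2) = ∑ k, cinner (z k) (z k) := by
  simp only [cinner_sum_tensor, hu, ite_mul, one_mul, zero_mul, sum_ite_eq, mem_univ, if_true]

lemma exists_orthonormal_tensor_expansion_of_mem (V : Submodule ℂ (EuclideanSpace ℂ ιA))
    (φ : ιA × ιB → ℂ) (hφ : ∀ b, WithLp.toLp 2 (fun a => φ (a, b)) ∈ V) :
    ∃ (u : Fin (Module.finrank ℂ V) → ιA → ℂ) (z : Fin (Module.finrank ℂ V) → ιB → ℂ),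
      (∀ i j, cinner (u i) (u j) = if i = j then 1 else 0) ∧
      φ = fun p => ∑ k, u k p.1 * z k p.2 := by
  set e := stdOrthonormalBasis ℂ V
  refine ⟨fun k => (e k : EuclideanSpace ℂ ιA).ofLp,
    fun k b => cinner (e k : EuclideanSpace ℂ ιA).ofLp (fun a => φ (a, b)), fun i j => ?_, ?_⟩
  · rw [cinner_eq_inner]
    simpa only [WithLp.toLp_ofLp, Submodule.coe_inner] using
      orthonormal_iff_ite.mp e.orthonormal i j
  · ext ⟨a, b⟩
    have h := congrArg (fun v : V => (v : EuclideanSpace ℂ ιA) a) (e.sum_repr' ⟨_, hφ b⟩)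
    simp only [Submodule.coe_inner, AddSubmonoidClass.coe_finsetSum, SetLike.val_smul,
      WithLp.ofLp_sum, WithLp.ofLp_smul, Finset.sum_apply, Pi.smul_apply, smul_eq_mul] at h
    rw [← h]
    exact sum_congr rfl fun k _ => by
      dsimp only
      rw [cinner_eq_inner, WithLp.toLp_ofLp, mul_comm]

lemma SchmidtRankLE.exists_orthonormal_tensor_expansion {D : ℕ} {φ : ιA × ιB → ℂ}
    (h : SchmidtRankLE D φ) :
    ∃ d ≤ D, ∃ (u : Fin d → ιA → ℂ) (z : Fin d → ιB → ℂ),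
      (∀ i j, cinner (u i) (u j) = if i = j then 1 else 0) ∧
      φ = fun p => ∑ k, u k p.1 * z k p.2 := by
  obtain ⟨x, y, rfl⟩ := h
  let V := Submodule.span ℂ (Set.range fun j => WithLp.toLp 2 (x j))
  refine ⟨_, (finrank_range_le_card (R := ℂ) _).trans_eq (Fintype.card_fin D),
    exists_orthonormal_tensor_expansion_of_mem V _ fun b => ?_⟩
  have hcol : WithLp.toLp 2 (fun a => ∑ j, x j a * y j b) =
      ∑ j, y j b • WithLp.toLp 2 (x j) := by
    ext a
    simp [mul_comm]
  rw [hcol]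
  exact Submodule.sum_mem _ fun j _ => Submodule.smul_mem _ _ (Submodule.subset_span ⟨j, rfl⟩)

lemma norm_cinner_le_sqrt_mul_sqrt [Fintype ιB] {d M : ℕ} (u : Fin d → ιA → ℂ)
    (z : Fin d → ιB → ℂ) (lam : Fin M → ℝ) (l : Fin M → ιA → ℂ) {r : Fin M → ιB → ℂ}
    (hr : ∀ i j, cinner (r i) (r j) = if i = j then 1 else 0) :
    ‖cinner (fun p : ιA × ιB => ∑ k, u k p.1 * z k p.2)
        (fun p : ιA × ιB => ∑ j, (lam j : ℂ) * l j p.1 * r j p.2)‖ ≤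
      √(∑ j, lam j ^ 2 * ∑ k, ‖cinner (u k) (l j)‖ ^ 2) * √(∑ k, (cinner (z k) (z k)).re) := by
  have hexp : cinner (fun p : ιA × ιB => ∑ k, u k p.1 * z k p.2)
      (fun p : ιA × ιB => ∑ j, (lam j : ℂ) * l j p.1 * r j p.2) =
      ∑ x : Fin d × Fin M, (lam x.2 * cinner (u x.1) (l x.2)) * cinner (z x.1) (r x.2) := by
    rw [Fintype.sum_prod_type]
    exact (cinner_sum_tensor univ univ u z (fun j => (lam j : ℂ) • l j) r).trans
      (by simp only [cinner_smul_right])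
  have hA : ∑ x : Fin d × Fin M, ‖(lam x.2 : ℂ) * cinner (u x.1) (l x.2)‖ ^ 2 =
      ∑ j, lam j ^ 2 * ∑ k, ‖cinner (u k) (l j)‖ ^ 2 := by
    simp only [Fintype.sum_prod_type, norm_mul, mul_pow, Complex.norm_real, Real.norm_eq_abs,
      sq_abs, mul_sum]
    exact sum_comm
  have hB :
      ∑ x : Fin d × Fin M, ‖cinner (z x.1) (r x.2)‖ ^ 2 ≤ ∑ k, (cinner (z k) (z k)).re := by
    rw [Fintype.sum_prod_type]
    refine sum_le_sum fun k _ => ?_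
    simpa only [norm_cinner_comm] using sum_norm_cinner_sq_le hr (z k)
  rw [hexp]
  calc _ ≤ ∑ x : Fin d × Fin M,
          ‖(lam x.2 : ℂ) * cinner (u x.1) (l x.2)‖ * ‖cinner (z x.1) (r x.2)‖ :=
        (norm_sum_le _ _).trans_eq (sum_congr rfl fun _ _ => norm_mul _ _)
    _ ≤ _ := Real.sum_mul_le_sqrt_mul_sqrt _ _ _
    _ ≤ _ := by
      rw [hA]
      gcongr

end Tensor

section Weights

lemma sum_mul_le_sum_of_threshold {ι : Type*} [Fintype ι] [DecidableEq ι] (T : Finset ι)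
    {a p : ι → ℝ} {t : ℝ} (ht : 0 ≤ t) (haT : ∀ j ∈ T, t ≤ a j) (haTc : ∀ j ∉ T, a j ≤ t)
    (hp0 : ∀ j, 0 ≤ p j) (hp1 : ∀ j, p j ≤ 1) (hsum : ∑ j, p j ≤ #T) :
    ∑ j, a j * p j ≤ ∑ j ∈ T, a j := by
  have hpt : ∀ j, (a j - t) * p j ≤ if j ∈ T then a j - t else 0 := by
    intro j
    split_ifs with hj
    · nlinarith [haT j hj, hp1 j]
    · nlinarith [haTc j hj, hp0 j]
  calc ∑ j, a j * p j = ∑ j, (a j - t) * p j + t * ∑ j, p j := by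
        rw [mul_sum, ← sum_add_distrib]; exact sum_congr rfl fun j _ => by ring
    _ ≤ ∑ j, (if j ∈ T then a j - t else 0) + t * #T :=
        add_le_add (sum_le_sum fun j _ => hpt j) (mul_le_mul_of_nonneg_left hsum ht)
    _ = ∑ j ∈ T, a j := by
        rw [sum_ite_mem, univ_inter, sum_sub_distrib, sum_const, nsmul_eq_mul]; ring

lemma sum_mul_le_sum_filter_lt_of_antitone {M D : ℕ} {a p : Fin M → ℝ} (ha : Antitone a)
    (ha0 : ∀ j, 0 ≤ a j) (hp0 : ∀ j, 0 ≤ p j) (hp1 : ∀ j, p j ≤ 1) (hsum : ∑ j, p j ≤ D) :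
    ∑ j, a j * p j ≤ ∑ j ∈ univ.filter (fun j : Fin M => (j : ℕ) < D), a j := by
  have hsum' : ∑ j, p j ≤ #(univ.filter fun j : Fin M => (j : ℕ) < D) := by
    rw [Fin.card_filter_val_lt, Nat.cast_min]
    refine le_min ?_ hsum
    simpa using sum_le_sum fun j (_ : j ∈ univ) => hp1 j
  by_cases hDM : D < M
  · refine sum_mul_le_sum_of_threshold _ (ha0 ⟨D, hDM⟩) (fun j hj => ha ?_) (fun j hj => ha ?_)
      hp0 hp1 hsum'
    · simp only [mem_filter, mem_univ, true_and] at hj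
      exact Fin.mk_le_of_le_val hj.le
    · simp only [mem_filter, mem_univ, true_and, not_lt] at hj
      exact Fin.mk_le_of_le_val hj
  · refine sum_mul_le_sum_of_threshold _ le_rfl (fun j _ => ha0 j) (fun j hj => ?_) hp0 hp1 hsum'
    simp only [mem_filter, mem_univ, true_and] at hj
    omega

end Weights

theorem eckart_young_general {ιA ιB : Type*} [Fintype ιA] [Fintype ιB]
    (M : ℕ)
    (lam : Fin M → ℝ) (hpos : ∀ j, 0 < lam j)
    (hmono : ∀ i j : Fin M, i ≤ j → lam j ≤ lam i)
    (l : Fin M → ιA → ℂ) (r : Fin M → ιB → ℂ)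
    (hl : ∀ i j, cinner (l i) (l j) = if i = j then 1 else 0)
    (hr : ∀ i j, cinner (r i) (r j) = if i = j then 1 else 0)
    (ψ : ιA × ιB → ℂ)
    (hψ : ψ = fun p => ∑ j, (lam j : ℂ) * l j p.1 * r j p.2)
    (D : ℕ) :
    ∀ φ : ιA × ιB → ℂ, cinner φ φ = 1 → SchmidtRankLE D φ →
      letI trunc : ιA × ιB → ℂ := fun p =>
        ∑ j ∈ Finset.univ.filter (fun j : Fin M => (j : ℕ) < D),
          (lam j : ℂ) * l j p.1 * r j p.2
      letI ψ' : ιA × ιB → ℂ := (Real.sqrt ((cinner trunc trunc).re))⁻¹ • trunc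
      ‖cinner φ ψ‖ ≤ (cinner ψ' ψ).re := by
  intro φ hφ hrank
  subst hψ
  rw [cinner_real_smul_left, cinner_schmidt_sum_of_subset lam hl hr (subset_refl _),
    cinner_schmidt_sum_of_subset lam hl hr (subset_univ _)]
  obtain ⟨d, hdD, u, z, hu, rfl⟩ := hrank.exists_orthonormal_tensor_expansion
  have hz : ∑ k, (cinner (z k) (z k)).re = 1 := by
    rw [← Complex.re_sum, ← cinner_self_orthonormal_tensor_expansion hu, hφ, Complex.one_re]
  refine (norm_cinner_le_sqrt_mul_sqrt u z lam l hr).trans ?_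
  rw [hz, Real.sqrt_one, mul_one]
  simp only [Complex.ofReal_re, ← Complex.ofReal_mul, inv_mul_eq_div, Real.div_sqrt]
  gcongr
  refine sum_mul_le_sum_filter_lt_of_antitone (fun i j hij => ?_) (fun j => sq_nonneg _)
    (fun j => sum_nonneg fun k _ => sq_nonneg _) (fun j => ?_) ?_
  · exact pow_le_pow_left₀ (hpos j).le (hmono i j hij) 2
  · simpa only [hl j j, if_pos, Complex.one_re] using sum_norm_cinner_sq_le hu (l j)
  · exact (sum_sum_norm_cinner_sq_le_card hu hl).trans (by simpa using hdD)

theorem eckart_young {ιA ιB : Type*} [Fintype ιA] [Fintype ιB]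
    (M : ℕ)
    (lam : Fin M → ℝ) (hpos : ∀ j, 0 < lam j)
    (hmono : ∀ i j : Fin M, i ≤ j → lam j ≤ lam i)
    (l : Fin M → ιA → ℂ) (r : Fin M → ιB → ℂ)
    (hl : ∀ i j, cinner (l i) (l j) = if i = j then 1 else 0)
    (hr : ∀ i j, cinner (r i) (r j) = if i = j then 1 else 0)
    (ψ : ιA × ιB → ℂ)
    (hψ : ψ = fun p => ∑ j, (lam j : ℂ) * l j p.1 * r j p.2)
    (hψunit : cinner ψ ψ = 1)
    (D : ℕ) (hD : 0 < D) :
    ∀ φ : ιA × ιB → ℂ, cinner φ φ = 1 → SchmidtRankLE D φ →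
      letI trunc : ιA × ιB → ℂ := fun p =>
        ∑ j ∈ Finset.univ.filter (fun j : Fin M => (j : ℕ) < D),
          (lam j : ℂ) * l j p.1 * r j p.2
      letI ψ' : ιA × ιB → ℂ := (Real.sqrt ((cinner trunc trunc).re))⁻¹ • trunc
      ‖cinner φ ψ‖ ≤ (cinner ψ' ψ).re :=
  eckart_young_general M lam hpos hmono l r hl hr ψ hψ D
end
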